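/- arXiv:1412.4703 — 4 statements merged into one kernel-verified Lean document; each statement's English description precedes it below -/
import Mathlib

section
/- If f is a non-constant polynomial with complex coefficients, then every root of its derivative f' lies in the convex hull of the set of roots of f. -/
open Polynomial

theorem gauss_lucas (f : Polynomial ℂ) (hf : 1 ≤ f.natDegree)
    (z : ℂ) (hz : f.derivative.IsRoot z) :
    z ∈ convexHull ℝ (f.roots.toFinset : Set ℂ) := by
  have hdeg : 0 < f.degree := natDegree_pos_iff_degree_pos.mp hf
  rw [eq_centerMass_of_eval_derivative_eq_zero hdeg hz]
  exact Finset.centerMass_mem_convexHull _ (fun w _ ↦ derivRootWeight_nonneg f z w)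
    (sum_derivRootWeight_pos hdeg z) fun _ hw ↦ hw
end

section
/- Let p be a monic real polynomial of degree n ≥ 2 with all roots real. For any interval I ⊆ ℝ, if N_I denotes the number of roots of p in I (with multiplicity) and N'_I the number of roots of p' in I (with multiplicity), then |N_I − N'_I| ≤ 1. -/
/-!
By Rolle's theorem a root of `p'` lies strictly between any two consecutive distinct roots of `p`,
and a root of `p` of multiplicity `m` is a root of `p'` of multiplicity at least `m - 1`; hence on
any interval `p` has at most one root more than `p'`. Since `p` splits, `p'` has exactly one root
fewer than `p` in total, so the first bound applied to the complement of a lower set shows that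
`p'` has no more roots than `p` on a lower set. Splitting the lower set `lowerClosure I` into `I`
and the lower set `lowerClosure I \ I`, the two bounds combine to `N'_I ≤ N_I + 1`.
-/

open Polynomial

namespace Multiset

variable {α : Type*}

theorem card_le_card_add_one_of_count_le_of_card_toFinset_le [DecidableEq α]
    {s t : Multiset α} (hcount : ∀ x ∈ s, s.count x ≤ t.count x + 1)
    (hdistinct : s.toFinset.card ≤ (t.toFinset \ s.toFinset).card + 1) :
    card s ≤ card t + 1 := by
  have hle : s ≤ t.filter (· ∈ s) + s.dedup := by
    rw [le_iff_count]
    intro x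
    by_cases hx : x ∈ s
    · simpa [count_filter, count_dedup, hx] using hcount x hx
    · simp [count_eq_zero_of_notMem hx]
  have hsdiff : t.toFinset \ s.toFinset = (t.filter (· ∉ s)).toFinset := by
    ext x
    simp [and_comm]
  calc card s ≤ card (t.filter (· ∈ s)) + s.toFinset.card := by
        simpa [card_toFinset] using card_le_card hle
    _ ≤ card (t.filter (· ∈ s)) + (card (t.filter (· ∉ s)) + 1) := by
        grw [hdistinct, hsdiff, toFinset_card_le]
    _ = card t + 1 := by
        rw [← add_assoc, ← card_add, filter_add_not]

theorem card_filter_mem_add_card_filter_mem_compl (s : Multiset α) (L : Set α)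
    [DecidablePred (· ∈ L)] [DecidablePred (· ∈ Lᶜ)] :
    card (s.filter (· ∈ L)) + card (s.filter (· ∈ Lᶜ)) = card s := by
  rw [← card_add]
  congr 1
  convert filter_add_not (· ∈ L) s

theorem card_filter_mem_eq_add_card_filter_mem_diff (s : Multiset α) {A B : Set α}
    [DecidablePred (· ∈ A)] [DecidablePred (· ∈ B)] [DecidablePred (· ∈ B \ A)]
    (h : A ⊆ B) :
    card (s.filter (· ∈ B)) = card (s.filter (· ∈ A)) + card (s.filter (· ∈ B \ A)) := by
  have hdisj : s.filter (fun x => x ∈ A ∧ x ∈ B \ A) = 0 :=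
    filter_eq_nil.2 fun _ _ hx => hx.2.2 hx.1
  rw [← card_add, filter_add_filter, hdisj, add_zero]
  exact congrArg card <| filter_congr fun x _ => by
    rw [Set.mem_sdiff]
    exact ⟨fun hx => by tauto, fun hx => hx.elim (h ·) And.left⟩

end Multiset

theorem Set.OrdConnected.isLowerSet_lowerClosure_diff {α : Type*} [Preorder α] {s : Set α}
    (hs : s.OrdConnected) : IsLowerSet ((lowerClosure s : Set α) \ s) := by
  rintro x y hyx ⟨hx, hxs⟩
  refine ⟨(lowerClosure s).lower hyx hx, fun hys => hxs ?_⟩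
  obtain ⟨b, hb, hxb⟩ := mem_lowerClosure.1 hx
  exact hs.out hys hb ⟨hyx, hxb⟩

namespace Polynomial

theorem card_roots_filter_le_card_roots_derivative_filter_add_one (p : ℝ[X]) {L : Set ℝ}
    [DecidablePred (· ∈ L)] (hL : L.OrdConnected) :
    (p.roots.filter (· ∈ L)).card ≤ (p.derivative.roots.filter (· ∈ L)).card + 1 := by
  rcases eq_or_ne (derivative p) 0 with hp' | hp'
  · rw [eq_C_of_derivative_eq_zero hp']
    simp
  have hp : p ≠ 0 := ne_of_apply_ne derivative (by rwa [derivative_zero])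
  refine Multiset.card_le_card_add_one_of_count_le_of_card_toFinset_le (fun x hx => ?_) ?_
  · have hxL : x ∈ L := (Multiset.mem_filter.1 hx).2
    simp only [Multiset.count_filter_of_pos hxL, count_roots]
    have := p.rootMultiplicity_sub_one_le_derivative_rootMultiplicity x
    omega
  · refine Finset.card_le_sdiff_of_interleaved fun x hx y hy hxy _ => ?_
    simp only [Multiset.mem_toFinset, Multiset.mem_filter, mem_roots hp] at hx hy
    obtain ⟨z, hz, hpz⟩ := exists_deriv_eq_zero hxy p.continuousOn (hx.1.trans hy.1.symm)
    refine ⟨z, ?_, hz⟩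
    rw [Multiset.mem_toFinset, Multiset.mem_filter, mem_roots hp', IsRoot, ← p.deriv]
    exact ⟨hpz, hL.out hx.2 hy.2 (Set.Ioo_subset_Icc_self hz)⟩

theorem card_roots_derivative_add_one_of_splits {p : ℝ[X]} (hs : p.Splits)
    (hp : 0 < p.natDegree) : p.derivative.roots.card + 1 = p.roots.card := by
  have hle : p.derivative.roots.card ≤ p.natDegree - 1 :=
    (card_roots' _).trans (natDegree_derivative_le p)
  have := p.card_roots_le_derivative
  rw [splits_iff_card_roots.1 hs] at this ⊢
  omega

theorem card_roots_derivative_filter_le_of_isLowerSet {p : ℝ[X]} (hs : p.Splits)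
    (hp : 0 < p.natDegree) {L : Set ℝ} [DecidablePred (· ∈ L)] (hL : IsLowerSet L) :
    (p.derivative.roots.filter (· ∈ L)).card ≤ (p.roots.filter (· ∈ L)).card := by
  have hcompl := card_roots_filter_le_card_roots_derivative_filter_add_one p hL.compl.ordConnected
  have htotal := card_roots_derivative_add_one_of_splits hs hp
  rw [← p.roots.card_filter_mem_add_card_filter_mem_compl L,
    ← p.derivative.roots.card_filter_mem_add_card_filter_mem_compl L] at htotal
  omega

end Polynomial

open Classical in
theorem interlacing_count_general (n : ℕ) (hn : 2 ≤ n) (p : Polynomial ℝ)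
    (hd : p.natDegree = n) (hs : p.Splits)
    (I : Set ℝ) (hI : I.OrdConnected) :
    |((p.roots.filter (fun x => x ∈ I)).card : ℤ)
      - ((p.derivative.roots.filter (fun x => x ∈ I)).card : ℤ)| ≤ 1 := by
  have hp : 0 < p.natDegree := by omega
  have hI_sub : I ⊆ lowerClosure I := subset_lowerClosure
  have hclosure := card_roots_derivative_filter_le_of_isLowerSet hs hp (lowerClosure I).lower
  have hgap := card_roots_filter_le_card_roots_derivative_filter_add_one p
    hI.isLowerSet_lowerClosure_diff.ordConnected
  rw [p.roots.card_filter_mem_eq_add_card_filter_mem_diff hI_sub,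
    p.derivative.roots.card_filter_mem_eq_add_card_filter_mem_diff hI_sub] at hclosure
  have hI_le := card_roots_filter_le_card_roots_derivative_filter_add_one p hI
  rw [abs_sub_le_iff]
  omega

open Classical in
theorem interlacing_count (n : ℕ) (hn : 2 ≤ n) (p : Polynomial ℝ) (hm : p.Monic)
    (hd : p.natDegree = n) (hs : p.Splits)
    (I : Set ℝ) (hI : I.OrdConnected) :
    |((p.roots.filter (fun x => x ∈ I)).card : ℤ)
      - ((p.derivative.roots.filter (fun x => x ∈ I)).card : ℤ)| ≤ 1 :=
  interlacing_count_general n hn p hd hs I hI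
end

section
/- Let n ≥ 2 and let x₁, …, xₙ ∈ ℂ be the roots of p(z) = ∏ⱼ (z − xⱼ). Then the (n−1)×(n−1) matrix D(I − (1/n)J) + (xₙ/n)J, where D = diag(x₁,…,x_{n−1}), I is the identity, and J is the all-ones matrix, has characteristic polynomial equal to (1/n)·p'(z); equivalently its eigenvalues (with multiplicity) are exactly the critical points of p. -/
/-!
Subtracting the matrix from `z • 1` leaves `diag (z - xᵢ)` plus the rank-one matrix
`((xᵢ - xₙ) / n)ᵢ · (1, …, 1)`, so its determinant is
`∏ (z - xᵢ) + (1/n) ∑ᵢ (xᵢ - xₙ) ∏_{j ≠ i} (z - xⱼ)`.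
In the product rule for `p' = (∏_{i<n} (z - xᵢ) · (z - xₙ))'`, writing
`z - xₙ = (z - xᵢ) + (xᵢ - xₙ)` turns `p'` into `n` times the same expression.
-/

open Polynomial Matrix Finset

namespace Matrix

variable {ι : Type*} [Fintype ι] [DecidableEq ι]

theorem det_diagonal_add_vecMulVec_of_ne_zero {K : Type*} [Field K] {d : ι → K}
    (hd : ∀ i, d i ≠ 0) (u v : ι → K) :
    (diagonal d + vecMulVec u v).det = ∏ i, d i + ∑ i, u i * v i * ∏ j ∈ univ.erase i, d j := by
  have hdet : IsUnit (diagonal d).det := by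
    simpa [det_diagonal, isUnit_iff_ne_zero, prod_ne_zero_iff] using hd
  rw [vecMulVec_eq Unit, det_add_replicateCol_mul_replicateRow hdet, det_diagonal, det_unique,
    inv_diagonal]
  simp only [Matrix.mul_apply, replicateRow_apply, replicateCol_apply, add_apply, one_apply_eq,
    mul_add, mul_one, mul_sum, diagonal_apply, mul_ite, mul_zero, sum_ite_eq', mem_univ, if_true]
  congr 1
  refine sum_congr rfl fun i _ => ?_
  have hinv : d i * Ring.inverse d i = 1 :=
    congrFun (Ring.mul_inverse_cancel d (Pi.isUnit_iff.2 fun i => (hd i).isUnit)) i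
  rw [← mul_prod_erase univ d (mem_univ i)]
  linear_combination (u i * v i * ∏ j ∈ univ.erase i, d j) * hinv

theorem map_det_diagonal_add_vecMulVec {R S : Type*} [CommRing R] [CommRing S] (f : R →+* S)
    (d u v : ι → R) :
    f (diagonal d + vecMulVec u v).det = (diagonal (f ∘ d) + vecMulVec (f ∘ u) (f ∘ v)).det := by
  rw [RingHom.map_det]
  congr 1
  ext i j
  simp [diagonal_apply, apply_ite f, vecMulVec_apply]

theorem det_diagonal_add_vecMulVec {R : Type*} [CommRing R] (d u v : ι → R) :
    (diagonal d + vecMulVec u v).det = ∏ i, d i + ∑ i, u i * v i * ∏ j ∈ univ.erase i, d j := by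
  -- In the generic case the `dᵢ` become units of the fraction field, where the usual matrix
  -- determinant lemma applies; the identity then specializes to any `d`, `u`, `v`.
  let S := MvPolynomial (ι ⊕ ι ⊕ ι) ℤ
  let D : ι → S := fun i => MvPolynomial.X (.inl i)
  let U : ι → S := fun i => MvPolynomial.X (.inr (.inl i))
  let V : ι → S := fun i => MvPolynomial.X (.inr (.inr i))
  have universal : (diagonal D + vecMulVec U V).det
      = ∏ i, D i + ∑ i, U i * V i * ∏ j ∈ univ.erase i, D j := by
    apply IsFractionRing.injective S (FractionRing S)
    rw [map_det_diagonal_add_vecMulVec, det_diagonal_add_vecMulVec_of_ne_zero]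
    · simp [map_prod, map_sum]
    · intro i
      simpa [D] using MvPolynomial.X_ne_zero _
  have := congrArg (MvPolynomial.eval₂Hom (Int.castRingHom R) (Sum.elim d (Sum.elim u v))) universal
  rw [map_det_diagonal_add_vecMulVec] at this
  simpa only [map_add, map_sum, map_prod, map_mul, MvPolynomial.eval₂Hom_X', D, U, V,
    Function.comp_def, Sum.elim_inl, Sum.elim_inr] using this

theorem diagonal_mul_one_sub_smul_ones_add_smul_ones {R : Type*} [CommRing R] (y : ι → R)
    (a c : R) :
    diagonal y * (1 - c • of fun _ _ => (1 : R)) + (a * c) • of (fun _ _ => (1 : R))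
      = diagonal y - vecMulVec (fun i => (y i - a) * c) 1 := by
  ext i j
  simp only [add_apply, sub_apply, smul_apply, diagonal_mul, of_apply, smul_eq_mul,
    diagonal_apply, one_apply, vecMulVec_apply, Pi.one_apply]
  split_ifs <;> ring

theorem charpoly_diagonal_sub_vecMulVec {R : Type*} [CommRing R] (y u v : ι → R) :
    (diagonal y - vecMulVec u v).charpoly
      = ∏ i, (X - C (y i)) + ∑ i, C (u i * v i) * ∏ j ∈ univ.erase i, (X - C (y j)) := by
  have hcharmatrix : charmatrix (diagonal y - vecMulVec u v)
      = diagonal (fun i => X - C (y i)) + vecMulVec (C ∘ u) (C ∘ v) := by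
    ext i j : 1
    by_cases h : i = j
    · subst h
      simp only [charmatrix_apply_eq, sub_apply, diagonal_apply_eq, vecMulVec_apply, map_sub,
        map_mul, add_apply, Function.comp_apply]
      ring
    · simp [vecMulVec_apply, h]
  simp only [charpoly, hcharmatrix, det_diagonal_add_vecMulVec, Function.comp_apply, C_mul]

end Matrix

namespace Polynomial

theorem derivative_prod_X_sub_C_mul_X_sub_C {ι R : Type*} [Fintype ι] [DecidableEq ι]
    [CommRing R] (y : ι → R) (a : R) :
    derivative ((∏ i, (X - C (y i))) * (X - C a))
      = ((Fintype.card ι + 1 : ℕ) : R[X]) * ∏ i, (X - C (y i))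
        + ∑ i, C (y i - a) * ∏ j ∈ univ.erase i, (X - C (y j)) := by
  have hsplit : ∀ i, (∏ j ∈ univ.erase i, (X - C (y j))) * (X - C a)
      = ∏ j, (X - C (y j)) + C (y i - a) * ∏ j ∈ univ.erase i, (X - C (y j)) := by
    intro i
    rw [← prod_erase_mul univ _ (mem_univ i), C_sub]
    ring
  simp only [derivative_mul, derivative_prod_finset, derivative_X_sub_C, mul_one, sum_mul, hsplit,
    sum_add_distrib, sum_const, card_univ, nsmul_eq_mul]
  push_cast
  ring

end Polynomial

theorem charpoly_eq_C_inv_mul_derivative_prod {K : Type*} [Field K] [CharZero K] (m : ℕ)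
    (x : Fin (m + 1) → K) :
    (diagonal (fun i : Fin m => x i.castSucc) *
        ((1 : Matrix (Fin m) (Fin m) K) - ((m + 1 : ℕ) : K)⁻¹ • of fun _ _ => (1 : K))
      + (x (Fin.last m) / (m + 1 : ℕ)) • of (fun _ _ => (1 : K))).charpoly
    = C ((m + 1 : ℕ) : K)⁻¹ * derivative (∏ j, (X - C (x j))) := by
  rw [div_eq_mul_inv, diagonal_mul_one_sub_smul_ones_add_smul_ones,
    charpoly_diagonal_sub_vecMulVec, Fin.prod_univ_castSucc, derivative_prod_X_sub_C_mul_X_sub_C,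
    Fintype.card_fin, mul_add, ← mul_assoc, ← C_eq_natCast, ← C_mul,
    inv_mul_cancel₀ (Nat.cast_ne_zero.2 m.succ_ne_zero), C_1, one_mul, mul_sum]
  congr 1
  refine sum_congr rfl fun i _ => ?_
  rw [Pi.one_apply, mul_one, ← mul_assoc, ← C_mul, mul_comm (x _ - _)]

theorem companion_critical_points (n : ℕ) (hn : 2 ≤ n) (x : Fin n → ℂ) :
    (Matrix.diagonal (fun i : Fin (n - 1) => x (Fin.castLE (Nat.sub_le n 1) i)) *
        ((1 : Matrix (Fin (n - 1)) (Fin (n - 1)) ℂ)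
          - (n : ℂ)⁻¹ • (Matrix.of fun _ _ => (1 : ℂ)))
      + (x ⟨n - 1, Nat.sub_lt (by omega) one_pos⟩ / n) • (Matrix.of fun _ _ => (1 : ℂ))).charpoly
    = Polynomial.C ((n : ℂ)⁻¹)
        * Polynomial.derivative (∏ j, (Polynomial.X - Polynomial.C (x j))) := by
  obtain ⟨m, rfl⟩ : ∃ m, n = m + 1 := ⟨n - 1, by omega⟩
  -- `m + 1 - 1` reduces to `m`, and `Fin.castLE` to `Fin.castSucc`, definitionally.
  exact charpoly_eq_C_inv_mul_derivative_prod m x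
end

section
/- Let n ≥ 2, let x₁, …, xₙ ∈ ℂ with |xⱼ| ≤ τ for all j, and let y₁, …, y_{n−1} be the critical points of p(z) = ∏ⱼ (z − xⱼ) (listed with multiplicity). Then for every integer k ≥ 1 there is a constant C depending only on τ and k such that |(1/n)∑ⱼ xⱼᵏ − (1/(n−1))∑ⱼ yⱼᵏ| ≤ C/(n−1). -/
/-!
Write `P = ∏ (1 - xⱼ X)` and `R = ∏ (1 - yⱼ X)` for the reversals of `p` and `p' / n`, and
`F = ∑ₜ sₜ(x) Xᵗ`, `G = ∑ₜ sₜ(y) Xᵗ` for the generating series of the power sums. Logarithmic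
differentiation gives `P F = n P - X P'` and `R G = (n - 1) R - X R'`, and reversing
`p' = n ∏ (z - yⱼ)` gives `P F = n R`. Eliminating `P` and `R` leaves `F (F - G) = F + X F'`, i.e.
`∑_{i+j=k} sᵢ(x) dⱼ = (k + 1) sₖ(x)` with `dⱼ = sⱼ(x) - sⱼ(y)`. Its term `i = 0` is `n dₖ`;
with `T = max τ 1`, the bound `|sᵢ(x)| ≤ n Tⁱ` makes the other terms `n` times a quantity
independent of `n`, so strong induction gives `|dₖ| ≤ (3T)ᵏ`. Finally
`sₖ(x)/n - sₖ(y)/(n-1) = (n dₖ - sₖ(x)) / (n (n - 1))`.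
-/

open Polynomial Finset
open scoped PowerSeries

variable {R K ι κ : Type*}

noncomputable def psumSeries [CommRing R] [Fintype ι] (a : ι → R) : R⟦X⟧ :=
  PowerSeries.mk fun t => ∑ i, a i ^ t

section CommRing

variable [CommRing R] [Fintype ι] [DecidableEq ι]

theorem sum_prod_erase_one_sub_C_mul_X (a : ι → R) :
    ∑ j, ∏ i ∈ univ.erase j, (1 - C (a i) * X) =
      (Fintype.card ι : R[X]) * ∏ i, (1 - C (a i) * X) -
        X * derivative (∏ i, (1 - C (a i) * X)) := by
  rw [derivative_prod_finset, ← card_univ, ← nsmul_eq_mul, ← sum_const, mul_sum,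
    ← sum_sub_distrib]
  refine sum_congr rfl fun j _ => ?_
  rw [← mul_prod_erase univ _ (mem_univ j)]
  simp only [derivative_sub, derivative_one, derivative_mul, derivative_C, derivative_X]
  ring

theorem coe_prod_one_sub_C_mul_X_mul_psumSeries (a : ι → R) :
    ((∏ i, (1 - C (a i) * X) : R[X]) : R⟦X⟧) * psumSeries a =
      ((∑ j, ∏ i ∈ univ.erase j, (1 - C (a i) * X) : R[X]) : R⟦X⟧) := by
  have geom (c : R) : ((1 - C c * X : R[X]) : R⟦X⟧) * PowerSeries.mk (c ^ ·) = 1 := by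
    have := congrArg (PowerSeries.rescale c) (PowerSeries.mk_one_mul_one_sub_eq_one R)
    rw [map_mul, map_sub, map_one, PowerSeries.rescale_X, PowerSeries.rescale_mk] at this
    push_cast
    rw [mul_comm]
    simpa using this
  have hsum : psumSeries a = ∑ j, PowerSeries.mk (a j ^ ·) := by
    ext t
    simp [psumSeries]
  rw [hsum, mul_sum]
  conv_rhs => rw [← coeToPowerSeries.ringHom_apply, map_sum]
  refine sum_congr rfl fun j _ => ?_
  rw [← mul_prod_erase univ _ (mem_univ j), Polynomial.coe_mul, mul_right_comm, geom, one_mul]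
  rfl

theorem coe_prod_one_sub_C_mul_X_mul_psumSeries_eq (a : ι → R) :
    ((∏ i, (1 - C (a i) * X) : R[X]) : R⟦X⟧) * psumSeries a =
      (Fintype.card ι : R⟦X⟧) * ((∏ i, (1 - C (a i) * X) : R[X]) : R⟦X⟧) -
        PowerSeries.X * d⁄dX R ((∏ i, (1 - C (a i) * X) : R[X]) : R⟦X⟧) := by
  rw [coe_prod_one_sub_C_mul_X_mul_psumSeries, sum_prod_erase_one_sub_C_mul_X,
    PowerSeries.derivative_coe, Polynomial.coe_sub, Polynomial.coe_mul, Polynomial.coe_mul,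
    Polynomial.coe_X, ← coeToPowerSeries.ringHom_apply (φ := Nat.cast _), map_natCast]

end CommRing

theorem eval_prod_one_sub_C_mul_X [Field K] (s : Finset ι) (a : ι → K) {u : K}
    (hu : u ≠ 0) :
    eval u (∏ i ∈ s, (1 - C (a i) * X)) = u ^ #s * eval u⁻¹ (∏ i ∈ s, (X - C (a i))) := by
  simp only [eval_prod, eval_sub, eval_one, eval_mul, eval_C, eval_X, ← prod_const,
    ← prod_mul_distrib]
  refine prod_congr rfl fun i _ => ?_
  field_simp

theorem sum_prod_erase_one_sub_C_mul_X_eq [Field K] [Infinite K] [Fintype ι] [DecidableEq ι]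
    [Fintype κ] (x : ι → K) (y : κ → K) (c : K) (hcard : Fintype.card ι = Fintype.card κ + 1)
    (h : derivative (∏ i, (X - C (x i))) = C c * ∏ j, (X - C (y j))) :
    ∑ j, ∏ i ∈ univ.erase j, (1 - C (x i) * X) = C c * ∏ j, (1 - C (y j) * X) := by
  refine eq_of_infinite_eval_eq _ _
    ((Set.finite_singleton 0).infinite_compl.mono fun u (hu : u ≠ 0) => ?_)
  have hcard_erase (j : ι) : #(univ.erase j) = Fintype.card κ := by
    rw [card_erase_of_mem (mem_univ j), card_univ, hcard, Nat.add_sub_cancel]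
  calc eval u (∑ j, ∏ i ∈ univ.erase j, (1 - C (x i) * X))
      = ∑ j, u ^ Fintype.card κ * eval u⁻¹ (∏ i ∈ univ.erase j, (X - C (x i))) := by
        simp only [eval_finsetSum, eval_prod_one_sub_C_mul_X _ _ hu, hcard_erase]
    _ = u ^ Fintype.card κ * eval u⁻¹ (derivative (∏ i, (X - C (x i)))) := by
        simp [derivative_prod_finset, mul_sum, eval_finsetSum]
    _ = eval u (C c * ∏ j, (1 - C (y j) * X)) := by
        rw [h, eval_mul, eval_mul, eval_C, eval_C, eval_prod_one_sub_C_mul_X _ _ hu, card_univ]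
        ring

theorem derivative_prod_X_sub_C_eq [Field K] [CharZero K] [IsAlgClosed K] [Fintype ι]
    [Fintype κ] (x : ι → K) (y : κ → K)
    (hy : Multiset.map y univ.val = (derivative (∏ i, (X - C (x i)))).roots) :
    derivative (∏ i, (X - C (x i))) = C (Fintype.card ι : K) * ∏ j, (X - C (y j)) := by
  have hmonic : (∏ i, (X - C (x i))).Monic := monic_prod_of_monic _ _ fun i _ => monic_X_sub_C _
  have hdeg : (∏ i, (X - C (x i))).natDegree = Fintype.card ι := by
    simp [natDegree_prod_of_monic _ _ fun i _ => monic_X_sub_C (x i)]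
  conv_lhs => rw [(IsAlgClosed.splits (derivative (∏ i, (X - C (x i))))).eq_prod_roots,
    leadingCoeff_derivative, hmonic.leadingCoeff, hdeg, one_mul, ← hy, Multiset.map_map]
  rfl

theorem psumSeries_mul_sub_psumSeries [Field K] [CharZero K] [Fintype ι] [DecidableEq ι]
    [Fintype κ] [DecidableEq κ] (x : ι → K) (y : κ → K)
    (hcard : Fintype.card ι = Fintype.card κ + 1)
    (h : derivative (∏ i, (X - C (x i))) = C (Fintype.card ι : K) * ∏ j, (X - C (y j))) :
    psumSeries x * (psumSeries x - psumSeries y) =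
      psumSeries x + PowerSeries.X * d⁄dX K (psumSeries x) := by
  set m := Fintype.card κ
  set P : K⟦X⟧ := ((∏ i, (1 - C (x i) * X) : K[X]) : K⟦X⟧)
  set R : K⟦X⟧ := ((∏ j, (1 - C (y j) * X) : K[X]) : K⟦X⟧)
  set F := psumSeries x
  set G := psumSeries y
  have hPF : P * F = ((m : K⟦X⟧) + 1) * R := by
    rw [coe_prod_one_sub_C_mul_X_mul_psumSeries, sum_prod_erase_one_sub_C_mul_X_eq x y _ hcard h,
      hcard]
    push_cast
    simp [R]
  have hP : P * F = ((m : K⟦X⟧) + 1) * P - PowerSeries.X * d⁄dX K P := by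
    rw [coe_prod_one_sub_C_mul_X_mul_psumSeries_eq, hcard]
    push_cast
    rfl
  have hR : R * G = (m : K⟦X⟧) * R - PowerSeries.X * d⁄dX K R :=
    coe_prod_one_sub_C_mul_X_mul_psumSeries_eq y
  have hdPF : d⁄dX K P * F + P * d⁄dX K F = ((m : K⟦X⟧) + 1) * d⁄dX K R := by
    simpa [mul_comm] using congrArg (d⁄dX K) hPF
  have hR0 : ((m : K⟦X⟧) + 1) * R ≠ 0 := fun h0 => by
    simpa [R, Polynomial.constantCoeff_coe, coeff_zero_eq_eval_zero, eval_prod,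
      Nat.cast_add_one_ne_zero] using congrArg PowerSeries.constantCoeff h0
  -- logarithmic differentiation of `P F = (m + 1) R`, with denominators cleared
  refine mul_left_cancel₀ hR0 ?_
  linear_combination ((m + 1) * F - F ^ 2 + PowerSeries.X * d⁄dX K F) * hPF + F ^ 2 * hP
    - PowerSeries.X * F * hdPF - (m + 1) * F * hR

theorem sum_antidiagonal_psum_mul_sub_psum [CommRing R] [Fintype ι] [Fintype κ]
    (x : ι → R) (y : κ → R)
    (h : psumSeries x * (psumSeries x - psumSeries y) =
      psumSeries x + PowerSeries.X * d⁄dX R (psumSeries x)) (k : ℕ) :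
    ∑ p ∈ antidiagonal k, (∑ i, x i ^ p.1) * (∑ i, x i ^ p.2 - ∑ j, y j ^ p.2) =
      (k + 1) * ∑ i, x i ^ k := by
  have := congrArg (PowerSeries.coeff k) h
  rw [PowerSeries.coeff_mul, map_add] at this
  cases k with
  | zero => simpa [psumSeries] using this
  | succ k =>
    rw [PowerSeries.coeff_succ_X_mul, PowerSeries.coeff_derivative] at this
    simp only [psumSeries, map_sub, PowerSeries.coeff_mk] at this
    rw [this]
    push_cast
    ring

theorem add_one_add_sum_range_three_pow_le (k : ℕ) :
    (k : ℝ) + 1 + ∑ j ∈ range k, (3 : ℝ) ^ j ≤ 3 ^ k := by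
  induction k with
  | zero => simp
  | succ k ih =>
    rw [sum_range_succ, pow_succ]
    push_cast
    nlinarith [one_le_pow₀ (M₀ := ℝ) (a := 3) (n := k) (by norm_num)]

theorem norm_sum_pow_le [NormedRing R] [NormOneClass R] [Fintype ι] {a : ι → R} {T : ℝ}
    (ha : ∀ i, ‖a i‖ ≤ T) (t : ℕ) : ‖∑ i, a i ^ t‖ ≤ Fintype.card ι * T ^ t := by
  calc ‖∑ i, a i ^ t‖ ≤ ∑ i, ‖a i‖ ^ t :=
        (norm_sum_le _ _).trans (sum_le_sum fun i _ => norm_pow_le _ _)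
    _ ≤ ∑ _i : ι, T ^ t := sum_le_sum fun i _ => pow_le_pow_left₀ (norm_nonneg _) (ha i) t
    _ = Fintype.card ι * T ^ t := by rw [sum_const, card_univ, nsmul_eq_mul]

theorem norm_le_of_sum_antidiagonal_mul_eq {𝕜 : Type*} [RCLike 𝕜] {S D : ℕ → 𝕜} {n : ℕ}
    {T : ℝ} (hn : 0 < n) (hT : 0 ≤ T) (hS : ∀ t, ‖S t‖ ≤ n * T ^ t) (hS0 : S 0 = n)
    (hSD : ∀ k, ∑ p ∈ antidiagonal k, S p.1 * D p.2 = (k + 1) * S k) (k : ℕ) :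
    ‖D k‖ ≤ (3 * T) ^ k := by
  induction k using Nat.strong_induction_on with | _ k ih => ?_
  have hrec : n * D k = (k + 1) * S k - ∑ j ∈ range k, S (k - j) * D j := by
    rw [← hSD k, ← Nat.sum_antidiagonal_swap]
    simp only [Prod.fst_swap, Prod.snd_swap]
    rw [Nat.sum_antidiagonal_eq_sum_range_succ (fun j i => S i * D j), sum_range_succ,
      Nat.sub_self, hS0]
    ring
  have hsum : ‖∑ j ∈ range k, S (k - j) * D j‖ ≤ n * T ^ k * ∑ j ∈ range k, (3 : ℝ) ^ j := by
    rw [mul_sum]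
    refine (norm_sum_le _ _).trans (sum_le_sum fun j hj => ?_)
    have hjk : k - j + j = k := Nat.sub_add_cancel (mem_range.mp hj).le
    calc ‖S (k - j) * D j‖ ≤ n * T ^ (k - j) * (3 * T) ^ j := by
          rw [norm_mul]
          exact mul_le_mul (hS _) (ih j (mem_range.mp hj)) (norm_nonneg _)
            ((norm_nonneg _).trans (hS _))
      _ = n * (T ^ (k - j) * T ^ j) * 3 ^ j := by ring
      _ = n * T ^ k * 3 ^ j := by rw [← pow_add, hjk]
  have hnk : (n : ℝ) * ‖D k‖ ≤ n * ((3 * T) ^ k) := by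
    calc (n : ℝ) * ‖D k‖ = ‖(k + 1) * S k - ∑ j ∈ range k, S (k - j) * D j‖ := by
          rw [← hrec, norm_mul, RCLike.norm_natCast]
      _ ≤ (k + 1) * (n * T ^ k) + n * T ^ k * ∑ j ∈ range k, (3 : ℝ) ^ j := by
          refine (norm_sub_le _ _).trans (add_le_add ?_ hsum)
          rw [norm_mul]
          refine mul_le_mul ?_ (hS k) (norm_nonneg _) (by positivity)
          exact_mod_cast (RCLike.norm_natCast (K := 𝕜) (k + 1)).le
      _ = n * T ^ k * ((k : ℝ) + 1 + ∑ j ∈ range k, (3 : ℝ) ^ j) := by ring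
      _ ≤ n * T ^ k * 3 ^ k := by
          gcongr
          exact add_one_add_sum_range_three_pow_le k
      _ = n * ((3 * T) ^ k) := by ring
  exact le_of_mul_le_mul_left hnk (by exact_mod_cast hn)

theorem norm_inv_mul_sub_inv_mul_le {𝕜 : Type*} [RCLike 𝕜] {n : ℕ} (hn : 2 ≤ n) {a b : 𝕜}
    {A B : ℝ} (ha : ‖a‖ ≤ n * A) (hab : ‖a - b‖ ≤ B) :
    ‖(n : 𝕜)⁻¹ * a - ((n : 𝕜) - 1)⁻¹ * b‖ ≤ (A + B) / ((n : ℝ) - 1) := by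
  have hn1 : (1 : ℝ) < n := by exact_mod_cast hn
  have hn0 : (n : 𝕜) ≠ 0 := by exact_mod_cast (by omega : n ≠ 0)
  have hn1' : (n : 𝕜) - 1 ≠ 0 := by
    rw [sub_ne_zero]; exact_mod_cast (by omega : n ≠ 1)
  have key : (n : 𝕜)⁻¹ * a - ((n : 𝕜) - 1)⁻¹ * b = (n * (a - b) - a) / (n * (n - 1)) := by
    field_simp; ring
  have hnorm : ‖(n : 𝕜) - 1‖ = n - 1 := by
    rw [← Nat.cast_pred (by omega), RCLike.norm_natCast, Nat.cast_pred (by omega)]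
  rw [key, norm_div, norm_mul, hnorm, RCLike.norm_natCast,
    div_le_div_iff₀ (by positivity) (by linarith)]
  calc ‖(n : 𝕜) * (a - b) - a‖ * ((n : ℝ) - 1) ≤ (n * B + n * A) * ((n : ℝ) - 1) := by
        refine mul_le_mul_of_nonneg_right ((norm_sub_le _ _).trans (add_le_add ?_ ha))
          (by linarith)
        rw [norm_mul, RCLike.norm_natCast]
        gcongr
    _ = (A + B) * (n * (n - 1)) := by ring

theorem moments_of_critical_points_general (τ : ℝ) (k : ℕ) :
    ∃ C : ℝ, 0 < C ∧ ∀ (n : ℕ), 2 ≤ n → ∀ x : Fin n → ℂ,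
      (∀ j, ‖x j‖ ≤ τ) →
      ∀ y : Fin (n - 1) → ℂ,
        (Multiset.map y Finset.univ.val : Multiset ℂ)
          = (Polynomial.derivative (∏ j, (Polynomial.X - Polynomial.C (x j)))).roots →
        ‖(n : ℂ)⁻¹ * ∑ j, (x j) ^ k - ((n : ℂ) - 1)⁻¹ * ∑ j, (y j) ^ k‖
          ≤ C / ((n : ℝ) - 1) := by
  set T := max τ 1
  refine ⟨T ^ k + (3 * T) ^ k, by positivity, fun n hn x hx y hy => ?_⟩
  have hS (t : ℕ) : ‖∑ j, x j ^ t‖ ≤ n * T ^ t := by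
    simpa using norm_sum_pow_le (fun j => (hx j).trans (le_max_left τ 1)) t
  have hcard : Fintype.card (Fin n) = Fintype.card (Fin (n - 1)) + 1 := by
    simp only [Fintype.card_fin]; omega
  have hSD := sum_antidiagonal_psum_mul_sub_psum x y <|
    psumSeries_mul_sub_psumSeries x y hcard (derivative_prod_X_sub_C_eq x y hy)
  have hD := norm_le_of_sum_antidiagonal_mul_eq (S := fun t => ∑ j, x j ^ t)
    (D := fun t => ∑ j, x j ^ t - ∑ j, y j ^ t)
    (by omega) (by positivity) hS (by simp) hSD k
  exact norm_inv_mul_sub_inv_mul_le hn (hS k) hD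

theorem moments_of_critical_points (τ : ℝ) (k : ℕ) (hk : 1 ≤ k) :
    ∃ C : ℝ, 0 < C ∧ ∀ (n : ℕ), 2 ≤ n → ∀ x : Fin n → ℂ,
      (∀ j, ‖x j‖ ≤ τ) →
      ∀ y : Fin (n - 1) → ℂ,
        (Multiset.map y Finset.univ.val : Multiset ℂ)
          = (Polynomial.derivative (∏ j, (Polynomial.X - Polynomial.C (x j)))).roots →
        ‖(n : ℂ)⁻¹ * ∑ j, (x j) ^ k - ((n : ℂ) - 1)⁻¹ * ∑ j, (y j) ^ k‖
          ≤ C / ((n : ℝ) - 1) :=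
  moments_of_critical_points_general τ k
end
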